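/- arXiv:1905.11828 — 7 statements merged into one kernel-verified Lean document; each statement's English description precedes it below -/
import Mathlib

section
/- Let v be a vertex of a pseudo tree and let u ∈ Desc(v) \ ID(v). Then every G-neighbor of u that is an ancestor of u belongs to Desc(v) ∪ {v}. (Step in the proof of Theorem 1: such a variable u is eliminated within the subtree rooted at v and hence does not appear as a dimension of v's UTIL message.) -/
/-- `anc par u v` : `u` is an ancestor of `v` in the rooted tree with parent map `par`,
i.e. `(u, v)` lies in the transitive closure of `{(p, c) : par c = some p}`. -/
def anc {V : Type*} (par : V → Option V) (u v : V) : Prop :=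
  Relation.TransGen (fun p c => par c = some p) u v

/-- `desc par v` : the set of descendants of `v`. -/
def desc {V : Type*} (par : V → Option V) (v : V) : Set V := {u | anc par v u}

/-- `children par v` : the set of (tree) children of `v`. -/
def children {V : Type*} (par : V → Option V) (v : V) : Set V := {u | par u = some v}

/-- `apSet par G v` : the (pseudo) parents of `v`, i.e. the G-neighbors of `v`
that are ancestors of `v`. -/
def apSet {V : Type*} (par : V → Option V) (G : SimpleGraph V) (v : V) : Set V :=
  {u | G.Adj u v ∧ anc par u v}

/-- `pcSet par G v` : the pseudo children of `v`, i.e. descendants of `v` that are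
G-neighbors of `v` but whose parent is not `v`. -/
def pcSet {V : Type*} (par : V → Option V) (G : SimpleGraph V) (v : V) : Set V :=
  {u | u ∈ desc par v ∧ G.Adj u v ∧ par u ≠ some v}

/-- `sepSet par G v` : the separator of `v`, i.e. the ancestors of `v` that are
G-adjacent to `v` or to some descendant of `v`. -/
def sepSet {V : Type*} (par : V → Option V) (G : SimpleGraph V) (v : V) : Set V :=
  {u | anc par u v ∧ (G.Adj u v ∨ ∃ w ∈ desc par v, G.Adj u w)}

/-- `idSet par G v` : the interface descendants of `v`, i.e. the descendants of `v`
that are G-adjacent to some element of the separator of `v`. -/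
def idSet {V : Type*} (par : V → Option V) (G : SimpleGraph V) (v : V) : Set V :=
  {u | u ∈ desc par v ∧ ∃ w ∈ sepSet par G v, G.Adj u w}

/-- `evSet par G v c` : the elimination set `EV(v, c) = ((PC(v) ∩ Desc(c)) ∪ {c}) \ ID(v)`. -/
def evSet {V : Type*} (par : V → Option V) (G : SimpleGraph V) (v c : V) : Set V :=
  ((pcSet par G v ∩ desc par c) ∪ {c}) \ idSet par G v

theorem anc_trichotomous {V : Type*} (par : V → Option V) {a b u : V}
    (ha : anc par a u) (hb : anc par b u) :
    anc par a b ∨ a = b ∨ anc par b a := by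
  -- Read upwards, the parent relation is a function, so the ancestors of `u` form a chain.
  have hfun : Relator.RightUnique (Function.swap fun p c => par c = some p) :=
    fun _ _ _ h₁ h₂ => Option.some.inj (h₁.symm.trans h₂)
  have hua := Relation.transGen_swap.mpr ha
  have hub := Relation.transGen_swap.mpr hb
  rcases Relation.ReflTransGen.total_of_right_unique hfun hua.to_reflTransGen
      hub.to_reflTransGen with hab | hba
  · rcases Relation.reflTransGen_iff_eq_or_transGen.mp (Relation.reflTransGen_swap.mp hab)
      with rfl | h
    · exact Or.inr (Or.inl rfl)
    · exact Or.inr (Or.inr h)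
  · rcases Relation.reflTransGen_iff_eq_or_transGen.mp (Relation.reflTransGen_swap.mp hba)
      with rfl | h
    · exact Or.inr (Or.inl rfl)
    · exact Or.inl h

theorem neighbor_ancestor_of_eliminated_mem_subtree_general {V : Type*}
    (par : V → Option V) (G : SimpleGraph V)
    (v u : V) (hu : u ∈ desc par v) (hnid : u ∉ idSet par G v)
    (w : V) (hadj : G.Adj w u) (hanc : anc par w u) :
    w ∈ desc par v ∪ {v} := by
  rcases anc_trichotomous par hanc hu with hwv | rfl | hvw
  · -- `w` would lie in the separator of `v`, making `u` an interface descendant.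
    exact absurd ⟨hu, w, ⟨hwv, Or.inr ⟨u, hu, hadj⟩⟩, hadj.symm⟩ hnid
  · exact Or.inr rfl
  · exact Or.inl hvw

/-- Let `v` be a vertex of a pseudo tree and `u ∈ Desc(v) \ ID(v)`. Then every G-neighbor
of `u` that is an ancestor of `u` belongs to `Desc(v) ∪ {v}`. -/
theorem neighbor_ancestor_of_eliminated_mem_subtree {V : Type*} [Fintype V] (r : V)
    (par : V → Option V) (G : SimpleGraph V)
    (hroot : par r = none) (hne : ∀ v : V, v ≠ r → par v ≠ none)
    (hconn : ∀ v : V, v ≠ r → anc par r v)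
    (hPT : ∀ u v : V, G.Adj u v → anc par u v ∨ anc par v u)
    (v u : V) (hu : u ∈ desc par v) (hnid : u ∉ idSet par G v)
    (w : V) (hadj : G.Adj w u) (hanc : anc par w u) :
    w ∈ desc par v ∪ {v} :=
  neighbor_ancestor_of_eliminated_mem_subtree_general par G v u hu hnid w hadj hanc
end

section
/- In a pseudo tree in which every tree edge is a graph edge, for every vertex v and every u ∈ Desc(v): u ∈ ID(v) if and only if the highest neighbor-ancestor h(u) of u is an ancestor of v. (This characterizes exactly which descendant variables survive elimination below v, i.e., the interface descendants of v.) -/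
theorem mem_idSet_iff_exists_mem_apSet_anc {V : Type*} {par : V → Option V} {G : SimpleGraph V}
    {v u : V} (hu : u ∈ desc par v) :
    u ∈ idSet par G v ↔ ∃ w ∈ apSet par G u, anc par w v := by
  constructor
  · rintro ⟨-, w, ⟨hwv, -⟩, hwu⟩
    exact ⟨w, ⟨hwu.symm, hwv.trans hu⟩, hwv⟩
  · rintro ⟨w, ⟨hwu, -⟩, hwv⟩
    exact ⟨hu, w, ⟨hwv, Or.inr ⟨u, hu, hwu⟩⟩, hwu.symm⟩

theorem mem_idSet_iff_highest_anc_general {V : Type*}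
    (par : V → Option V) (G : SimpleGraph V)
    (v u : V) (hu : u ∈ desc par v)
    (h : V) (hh : h ∈ apSet par G u)
    (hhigh : ∀ w ∈ apSet par G u, w ≠ h → anc par h w) :
    u ∈ idSet par G v ↔ anc par h v := by
  rw [mem_idSet_iff_exists_mem_apSet_anc hu]
  refine ⟨?_, fun hhv => ⟨h, hh, hhv⟩⟩
  rintro ⟨w, hw, hwv⟩
  obtain rfl | hwh := eq_or_ne w h
  · exact hwv
  · exact (hhigh w hw hwh).trans hwv

/-- In a pseudo tree in which every tree edge is a graph edge, for every vertex `v` and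
every `u ∈ Desc(v)`: `u ∈ ID(v)` iff the highest neighbor-ancestor `h` of `u` is an
ancestor of `v`. -/
theorem mem_idSet_iff_highest_anc {V : Type*} [Fintype V] (r : V)
    (par : V → Option V) (G : SimpleGraph V)
    (hroot : par r = none) (hne : ∀ v : V, v ≠ r → par v ≠ none)
    (hconn : ∀ v : V, v ≠ r → anc par r v)
    (hPT : ∀ u v : V, G.Adj u v → anc par u v ∨ anc par v u)
    (hTE : ∀ v p : V, par v = some p → G.Adj v p)
    (v u : V) (hu : u ∈ desc par v)
    (h : V) (hh : h ∈ apSet par G u)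
    (hhigh : ∀ w ∈ apSet par G u, w ≠ h → anc par h w) :
    u ∈ idSet par G v ↔ anc par h v :=
  mem_idSet_iff_highest_anc_general par G v u hu h hh hhigh
end

section
/- In a pseudo tree, if u is a G-neighbor of v with u ∈ Desc(v) and u ∉ ID(v), then v is the highest neighbor-ancestor of u: v ∈ AP(u) and v is an ancestor of every other element of AP(u). (Correctness of the elimination site in generalized non-local elimination: a (pseudo) child of v not in ID(v) is eliminated exactly at v.) -/
/-! Ancestors of a common vertex form a chain, because each vertex has at most one parent.
So an element `w ≠ v` of `AP(u)` is either an ancestor or a descendant of `v`; were it an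
ancestor, it would lie in `Sep(v)` (being adjacent to the descendant `u`), and `u` would be
in `ID(v)`. -/

theorem eq_or_anc_or_anc_of_anc_of_anc {V : Type*} {par : V → Option V} {u a b : V}
    (ha : anc par a u) (hb : anc par b u) : a = b ∨ anc par a b ∨ anc par b a := by
  induction ha with
  | single hpa =>
    cases hb with
    | single hpb => exact .inl (Option.some.inj (hpb.symm.trans hpa)).symm
    | tail hb' hpb => exact .inr (.inr (Option.some.inj (hpb.symm.trans hpa) ▸ hb'))
  | tail ha' hpa ih =>
    cases hb with
    | single hpb => exact .inr (.inl (Option.some.inj (hpa.symm.trans hpb) ▸ ha'))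
    | tail hb' hpb => exact ih (Option.some.inj (hpb.symm.trans hpa) ▸ hb')

theorem not_anc_of_adj_of_not_mem_idSet {V : Type*} {par : V → Option V} {G : SimpleGraph V}
    {v u w : V} (hu : u ∈ desc par v) (hnid : u ∉ idSet par G v) (hwu : G.Adj w u) :
    ¬ anc par w v :=
  fun hwv => hnid ⟨hu, w, ⟨hwv, .inr ⟨u, hu, hwu⟩⟩, hwu.symm⟩

theorem highest_neighbor_ancestor_of_not_interface_general {V : Type*}
    (par : V → Option V) (G : SimpleGraph V)
    (v u : V) (hadj : G.Adj u v) (hu : u ∈ desc par v) (hnid : u ∉ idSet par G v) :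
    v ∈ apSet par G u ∧ ∀ w ∈ apSet par G u, w ≠ v → anc par v w := by
  refine ⟨⟨hadj.symm, hu⟩, fun w ⟨hwu, hw⟩ hwv => ?_⟩
  rcases eq_or_anc_or_anc_of_anc_of_anc hw hu with rfl | hanc | hanc
  · exact absurd rfl hwv
  · exact absurd hanc (not_anc_of_adj_of_not_mem_idSet hu hnid hwu)
  · exact hanc

/-- In a pseudo tree, if `u` is a G-neighbor of `v` with `u ∈ Desc(v)` and `u ∉ ID(v)`,
then `v` is the highest neighbor-ancestor of `u`: `v ∈ AP(u)` and `v` is an ancestor of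
every other element of `AP(u)`. -/
theorem highest_neighbor_ancestor_of_not_interface {V : Type*} [Fintype V] (r : V)
    (par : V → Option V) (G : SimpleGraph V)
    (hroot : par r = none) (hne : ∀ v : V, v ≠ r → par v ≠ none)
    (hconn : ∀ v : V, v ≠ r → anc par r v)
    (hPT : ∀ u v : V, G.Adj u v → anc par u v ∨ anc par v u)
    (v u : V) (hadj : G.Adj u v) (hu : u ∈ desc par v) (hnid : u ∉ idSet par G v) :
    v ∈ apSet par G u ∧ ∀ w ∈ apSet par G u, w ≠ v → anc par v w :=
  highest_neighbor_ancestor_of_not_interface_general par G v u hadj hu hnid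
end

section
/- In a pseudo tree in which every tree edge is a graph edge, every non-root vertex u satisfies u ∉ ID(h(u)), where h(u) is the highest neighbor-ancestor of u. (Hence each variable is indeed eliminated at its highest (pseudo) parent in generalized non-local elimination.) -/
/-! A vertex `w` of the separator of `h` is a proper ancestor of `h`, hence of `u`. If `u` were
adjacent to `w`, then `w` would be a neighbor-ancestor of `u`; as `h` is the highest one, `w = h`
or `h` is an ancestor of `w`, and either way `h` is a proper ancestor of itself. The ancestor
relation is irreflexive because a cycle through `v` would pass through every ancestor of `v`,
including the root, which has no parent. -/

section Ancestry

variable {V : Type*} {par : V → Option V}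

lemma not_anc_of_par_eq_none {r a : V} (hroot : par r = none) : ¬ anc par a r := by
  intro h
  obtain ⟨b, -, hbr⟩ := Relation.TransGen.tail'_iff.mp h
  simp [hroot] at hbr

lemma reflTransGen_of_anc_of_par_eq {v c a : V} (hvc : anc par v c) (hca : par c = some a) :
    Relation.ReflTransGen (fun p c => par c = some p) v a := by
  obtain ⟨b, hvb, hcb⟩ := Relation.TransGen.tail'_iff.mp hvc
  obtain rfl : b = a := Option.some_injective _ (hcb.symm.trans hca)
  exact hvb

lemma anc_of_anc_self_of_anc {v a : V} (hvv : anc par v v) (hav : anc par a v) :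
    anc par v a := by
  have parent_on_cycle : ∀ {c p}, anc par v c → par c = some p → anc par v p := fun hvc hca =>
    (Relation.reflTransGen_iff_eq_or_transGen.mp (reflTransGen_of_anc_of_par_eq hvc hca)).elim
      (fun hvp => hvp ▸ hvv) id
  induction hav using Relation.TransGen.head_induction_on with
  | single hva => exact parent_on_cycle hvv hva
  | head hba _ ih => exact parent_on_cycle ih hba

theorem anc_irrefl {r : V} (hroot : par r = none) (hconn : ∀ v : V, v ≠ r → anc par r v)
    (v : V) : ¬ anc par v v := by
  intro hvv
  have hvr : v ≠ r := by
    rintro rfl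
    exact not_anc_of_par_eq_none hroot hvv
  exact not_anc_of_par_eq_none hroot (anc_of_anc_self_of_anc hvv (hconn v hvr))

end Ancestry

theorem not_mem_idSet_of_highest_neighbor_ancestor_general {V : Type*} (r : V)
    (par : V → Option V) (G : SimpleGraph V)
    (hroot : par r = none)
    (hconn : ∀ v : V, v ≠ r → anc par r v)
    (u : V)
    (h : V) (hh : h ∈ apSet par G u)
    (hhigh : ∀ w ∈ apSet par G u, w ≠ h → anc par h w) :
    u ∉ idSet par G h := by
  rintro ⟨-, w, ⟨hwh, -⟩, hwu⟩
  have hw_ap : w ∈ apSet par G u := ⟨hwu.symm, hwh.trans hh.2⟩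
  by_cases hw : w = h
  · subst hw
    exact anc_irrefl hroot hconn w hwh
  · exact anc_irrefl hroot hconn h ((hhigh w hw_ap hw).trans hwh)

/-- In a pseudo tree in which every tree edge is a graph edge, every non-root vertex `u`
satisfies `u ∉ ID(h)`, where `h` is the highest neighbor-ancestor of `u`. -/
theorem not_mem_idSet_of_highest_neighbor_ancestor {V : Type*} [Fintype V] (r : V)
    (par : V → Option V) (G : SimpleGraph V)
    (hroot : par r = none) (hne : ∀ v : V, v ≠ r → par v ≠ none)
    (hconn : ∀ v : V, v ≠ r → anc par r v)
    (hPT : ∀ u v : V, G.Adj u v → anc par u v ∨ anc par v u)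
    (hTE : ∀ v p : V, par v = some p → G.Adj v p)
    (u : V) (hu : u ≠ r)
    (h : V) (hh : h ∈ apSet par G u)
    (hhigh : ∀ w ∈ apSet par G u, w ≠ h → anc par h w) :
    u ∉ idSet par G h :=
  not_mem_idSet_of_highest_neighbor_ancestor_general r par G hroot hconn u h hh hhigh
end

section
/- In a pseudo tree in which every tree edge is a graph edge, for every non-root vertex u there exists exactly one pair (v, c) with c ∈ C(v) and u ∈ EV(v, c); namely v = h(u) is the highest neighbor-ancestor of u, and c is the unique child of v with u ∈ {c} ∪ Desc(c). (Hence in generalized non-local elimination every variable is eliminated exactly once, at its highest (pseudo) parent, in the branch containing it.) -/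
/-!
Because every vertex has at most one parent, the ancestors of a vertex form a chain, and
reachability from a parentless root rules out cycles. If `u ∈ EV(v, c)` then `v` is a
neighbour-ancestor of `u` (for `u = c` because tree edges are graph edges); were `v ≠ h(u)`,
then `h(u)` would be an ancestor of `v` adjacent to the descendant `u`, so `h(u) ∈ Sep(v)` and
`u ∈ ID(v)`. Conversely `u` never lies in `ID(h(u))`: an element of `Sep(h(u))` adjacent to `u`
would be a neighbour-ancestor of `u` strictly above `h(u)`. The child `c` is then the first step
of the tree path from `h(u)` down to `u`.
-/

section Ancestors

variable {V : Type*} {par : V → Option V}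

lemma eq_or_anc_of_anc_of_parent {a v p : V} (hv : par v = some p) (h : anc par a v) :
    p = a ∨ anc par a p := by
  obtain ⟨b, hab, hbv⟩ := Relation.TransGen.tail'_iff.mp h
  obtain rfl : b = p := Option.some_inj.mp (hbv.symm.trans hv)
  exact Relation.reflTransGen_iff_eq_or_transGen.mp hab

lemma anc_self_of_parent {v p : V} (hv : par v = some p) (h : anc par v v) : anc par p p := by
  rcases eq_or_anc_of_anc_of_parent hv h with rfl | hvp
  · exact h
  · exact Relation.TransGen.head hv hvp

lemma not_anc_self {r : V} (hroot : par r = none) (hconn : ∀ v, v ≠ r → anc par r v) (v : V) :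
    ¬ anc par v v := by
  suffices key : ∀ w, Relation.ReflTransGen (fun p c => par c = some p) r w → ¬ anc par w w by
    by_cases hvr : v = r
    · exact key v (hvr ▸ Relation.ReflTransGen.refl)
    · exact key v (hconn v hvr).to_reflTransGen
  intro w hrw
  induction hrw with
  | refl =>
    intro hrr
    obtain ⟨b, -, hb⟩ := Relation.TransGen.tail'_iff.mp hrr
    simp [hroot] at hb
  | tail _ hbw ih => exact fun hww => ih (anc_self_of_parent hbw hww)

lemma anc_total_of_anc {a b v : V} (ha : anc par a v) (hb : anc par b v) :
    a = b ∨ anc par a b ∨ anc par b a := by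
  induction ha generalizing b with
  | single hav =>
    rcases eq_or_anc_of_anc_of_parent hav hb with rfl | hba
    · exact Or.inl rfl
    · exact Or.inr (Or.inr hba)
  | tail hac hcv ih =>
    rcases eq_or_anc_of_anc_of_parent hcv hb with rfl | hbc
    · exact Or.inr (Or.inl hac)
    · exact ih hbc

lemma not_anc_of_parent_eq (hirr : ∀ w, ¬ anc par w w) {x y z : V}
    (hx : par x = some z) (hy : par y = some z) : ¬ anc par x y := by
  intro hxy
  rcases eq_or_anc_of_anc_of_parent hy hxy with rfl | hxz
  · exact hirr _ (.single hx)
  · exact hirr x (hxz.tail hx)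

lemma exists_child_mem_subtree {v u : V} (h : anc par v u) :
    ∃ c ∈ children par v, u ∈ ({c} : Set V) ∪ desc par c := by
  obtain ⟨c, hvc, hcu⟩ := Relation.TransGen.head'_iff.mp h
  exact ⟨c, hvc, Relation.reflTransGen_iff_eq_or_transGen.mp hcu⟩

lemma child_eq_of_mem_subtree (hirr : ∀ w, ¬ anc par w w) {v c₁ c₂ u : V}
    (h₁ : c₁ ∈ children par v) (h₂ : c₂ ∈ children par v)
    (hu₁ : u ∈ ({c₁} : Set V) ∪ desc par c₁) (hu₂ : u ∈ ({c₂} : Set V) ∪ desc par c₂) :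
    c₁ = c₂ := by
  have h₁₂ := not_anc_of_parent_eq hirr h₁ h₂
  have h₂₁ := not_anc_of_parent_eq hirr h₂ h₁
  rcases hu₁ with rfl | hu₁ <;> rcases hu₂ with rfl | hu₂
  · rfl
  · exact absurd hu₂ h₂₁
  · exact absurd hu₁ h₁₂
  · exact (anc_total_of_anc hu₁ hu₂).resolve_right (not_or.mpr ⟨h₁₂, h₂₁⟩)

end Ancestors

section Elimination

variable {V : Type*} {par : V → Option V} {G : SimpleGraph V}

lemma mem_subtree_of_mem_evSet {v c u : V} (hu : u ∈ evSet par G v c) :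
    u ∈ ({c} : Set V) ∪ desc par c := by
  rcases hu.1 with hu | hu
  · exact Or.inr hu.2
  · exact Or.inl hu

lemma mem_apSet_of_mem_evSet (hTE : ∀ v p : V, par v = some p → G.Adj v p) {v c u : V}
    (hc : c ∈ children par v) (hu : u ∈ evSet par G v c) : v ∈ apSet par G u := by
  rcases hu.1 with ⟨⟨hvu, hadj, -⟩, -⟩ | rfl
  · exact ⟨hadj.symm, hvu⟩
  · exact ⟨(hTE u v hc).symm, .single hc⟩

lemma notMem_idSet_of_highest (hirr : ∀ w, ¬ anc par w w) {u h : V} (hhu : anc par h u)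
    (hhigh : ∀ w ∈ apSet par G u, w ≠ h → anc par h w) : u ∉ idSet par G h := by
  rintro ⟨-, w, ⟨hwh, -⟩, huw⟩
  have hwh' : w ≠ h := by
    rintro rfl
    exact hirr w hwh
  exact hirr h ((hhigh w ⟨huw.symm, hwh.trans hhu⟩ hwh').trans hwh)

lemma mem_evSet_of_highest (hirr : ∀ w, ¬ anc par w w) {u h c : V} (hh : h ∈ apSet par G u)
    (hhigh : ∀ w ∈ apSet par G u, w ≠ h → anc par h w) (hc : c ∈ children par h)
    (hcu : u ∈ ({c} : Set V) ∪ desc par c) : u ∈ evSet par G h c := by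
  refine ⟨?_, notMem_idSet_of_highest hirr hh.2 hhigh⟩
  rcases hcu with rfl | hcu
  · exact Or.inr rfl
  · exact Or.inl ⟨⟨hh.2, hh.1.symm, fun hu => not_anc_of_parent_eq hirr hc hu hcu⟩, hcu⟩

lemma eq_highest_of_mem_evSet (hTE : ∀ v p : V, par v = some p → G.Adj v p) {u h v c : V}
    (hh : h ∈ apSet par G u) (hhigh : ∀ w ∈ apSet par G u, w ≠ h → anc par h w)
    (hc : c ∈ children par v) (hu : u ∈ evSet par G v c) : v = h := by
  by_contra hvh
  have hv := mem_apSet_of_mem_evSet hTE hc hu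
  have hsep : h ∈ sepSet par G v := ⟨hhigh v hv hvh, Or.inr ⟨u, hv.2, hh.1⟩⟩
  exact hu.2 ⟨hv.2, h, hsep, hh.1.symm⟩

end Elimination

theorem eliminated_exactly_once_general {V : Type*} (r : V)
    (par : V → Option V) (G : SimpleGraph V)
    (hroot : par r = none)
    (hconn : ∀ v : V, v ≠ r → anc par r v)
    (hTE : ∀ v p : V, par v = some p → G.Adj v p)
    (u : V)
    (h : V) (hh : h ∈ apSet par G u)
    (hhigh : ∀ w ∈ apSet par G u, w ≠ h → anc par h w) :
    (∃! p : V × V, p.2 ∈ children par p.1 ∧ u ∈ evSet par G p.1 p.2) ∧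
    (∀ v c : V, c ∈ children par v → u ∈ evSet par G v c →
      v = h ∧ u ∈ ({c} : Set V) ∪ desc par c ∧
        ∀ c' ∈ children par v, u ∈ ({c'} : Set V) ∪ desc par c' → c' = c) := by
  have hirr := not_anc_self hroot hconn
  obtain ⟨c, hc, hcu⟩ := exists_child_mem_subtree hh.2
  refine ⟨⟨(h, c), ⟨hc, mem_evSet_of_highest hirr hh hhigh hc hcu⟩, ?_⟩, ?_⟩
  · rintro ⟨v, c'⟩ ⟨hc', hu'⟩
    obtain rfl := eq_highest_of_mem_evSet hTE hh hhigh hc' hu'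
    exact Prod.ext rfl (child_eq_of_mem_subtree hirr hc' hc (mem_subtree_of_mem_evSet hu') hcu)
  · intro v c' hc' hu'
    obtain rfl := eq_highest_of_mem_evSet hTE hh hhigh hc' hu'
    have hu'c' := mem_subtree_of_mem_evSet hu'
    exact ⟨rfl, hu'c', fun c'' hc'' hu'' => child_eq_of_mem_subtree hirr hc'' hc' hu'' hu'c'⟩

/-- In a pseudo tree in which every tree edge is a graph edge, for every non-root vertex
`u` there is exactly one pair `(v, c)` with `c ∈ C(v)` and `u ∈ EV(v, c)`; namely
`v = h(u)` is the highest neighbor-ancestor of `u` and `c` is the unique child of `v`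
with `u ∈ {c} ∪ Desc(c)`. -/
theorem eliminated_exactly_once {V : Type*} [Fintype V] (r : V)
    (par : V → Option V) (G : SimpleGraph V)
    (hroot : par r = none) (hne : ∀ v : V, v ≠ r → par v ≠ none)
    (hconn : ∀ v : V, v ≠ r → anc par r v)
    (hPT : ∀ u v : V, G.Adj u v → anc par u v ∨ anc par v u)
    (hTE : ∀ v p : V, par v = some p → G.Adj v p)
    (u : V) (hu : u ≠ r)
    (h : V) (hh : h ∈ apSet par G u)
    (hhigh : ∀ w ∈ apSet par G u, w ≠ h → anc par h w) :
    (∃! p : V × V, p.2 ∈ children par p.1 ∧ u ∈ evSet par G p.1 p.2) ∧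
    (∀ v c : V, c ∈ children par v → u ∈ evSet par G v c →
      v = h ∧ u ∈ ({c} : Set V) ∪ desc par c ∧
        ∀ c' ∈ children par v, u ∈ ({c'} : Set V) ∪ desc par c' → c' = c) :=
  eliminated_exactly_once_general r par G hroot hconn hTE u h hh hhigh
end

section
/- Let F, G : (Π i, D i) → ℝ and let i₀ ∈ I be an index such that F does not depend on i₀. Then the minimum over all assignments σ of F σ + G σ equals the minimum over all assignments σ of F σ + min_{d ∈ D i₀} G (update σ i₀ d). (Correctness of variable elimination: a variable may be optimally eliminated once all functions involving it have been aggregated, the principle underlying generalized non-local elimination.) -/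
open Finset Function

theorem Finset.add_inf'_eq_inf'_add {ι α : Type*} [Lattice α] [AddGroup α] [AddLeftMono α]
    {s : Finset ι} (hs : s.Nonempty) (f : ι → α) (c : α) :
    c + s.inf' hs f = s.inf' hs fun i => c + f i :=
  apply_inf'_eq_inf'_comp hs (c + ·) fun x y => add_inf x y c

theorem inf'_univ_eq_inf'_univ_inf'_update {ι α : Type*} [Fintype ι] [DecidableEq ι]
    {D : ι → Type*} [∀ i, Fintype (D i)] [∀ i, Nonempty (D i)] [SemilatticeInf α]
    (H : (∀ i, D i) → α) (i₀ : ι) :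
    univ.inf' univ_nonempty H =
      univ.inf' univ_nonempty fun σ => univ.inf' univ_nonempty fun d : D i₀ => H (update σ i₀ d) := by
  refine le_antisymm (le_inf' _ _ fun σ _ => le_inf' _ _ fun d _ => inf'_le _ (mem_univ _))
    (le_inf' _ _ fun σ _ => ?_)
  calc univ.inf' univ_nonempty (fun σ => univ.inf' univ_nonempty fun d : D i₀ => H (update σ i₀ d))
      ≤ H (update σ i₀ (σ i₀)) := (inf'_le _ (mem_univ σ)).trans (inf'_le _ (mem_univ _))
    _ = H σ := by rw [update_eq_self]

/-- Correctness of variable elimination: if `F` does not depend on index `i₀`, then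
`min_σ (F σ + G σ) = min_σ (F σ + min_{d ∈ D i₀} G (update σ i₀ d))`. -/
theorem variable_elimination_correct {I : Type*} [Fintype I] [DecidableEq I]
    (D : I → Type*) [∀ i, Fintype (D i)] [∀ i, Nonempty (D i)]
    (F G : (∀ i, D i) → ℝ) (i₀ : I)
    (hF : ∀ σ τ : ∀ i, D i, (∀ i, i ≠ i₀ → σ i = τ i) → F σ = F τ) :
    (Finset.univ.inf' Finset.univ_nonempty fun σ : ∀ i, D i => F σ + G σ) =
      Finset.univ.inf' Finset.univ_nonempty fun σ : ∀ i, D i =>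
        F σ + Finset.univ.inf' Finset.univ_nonempty fun d : D i₀ =>
          G (Function.update σ i₀ d) := by
  rw [inf'_univ_eq_inf'_univ_inf'_update _ i₀]
  refine inf'_congr _ rfl fun σ _ => ?_
  have hF_update (d : D i₀) : F (update σ i₀ d) = F σ :=
    hF _ _ fun i hi => update_of_ne hi _ _
  simp only [hF_update, add_inf'_eq_inf'_add]
end

section
/- Let n ≥ 3 and consider the graph G on vertex set {1, …, n} whose edges are {i, i+1} for 1 ≤ i < n together with {1, j} for 3 ≤ j ≤ n, with the rooted tree given by root 1 and par(i) = i − 1 for i ≥ 2. Then this rooted tree is a pseudo tree for G, and for every i with 2 ≤ i ≤ n one has Desc(i) = {i+1, …, n}, ID(i) = {i+1, …, n}, Sep(2) = {1}, and Sep(i) = {1, i−1} for 3 ≤ i ≤ n. In particular Sep(2) ∪ ID(2) ∪ {2} = {1, …, n} has cardinality n, so the UTIL message of agent 2 under generalized non-local elimination carries all n dimensions (memory O(dⁿ) on this chain). -/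
/-- The vertex set `{1, …, n}`. -/
def ChainV (n : ℕ) : Type := {i : ℕ // i ∈ Finset.Icc 1 n}

/-- The parent map of the chain: `par 1 = none` and `par i = i - 1` for `i ≥ 2`. -/
def chainPar (n : ℕ) : ChainV n → Option (ChainV n) := fun v =>
  if h1 : v.val = 1 then none
  else some ⟨v.val - 1, by
    have hv := v.property
    simp only [Finset.mem_Icc] at hv ⊢
    omega⟩

/-- The graph on `{1, …, n}` with edges `{i, i+1}` for `1 ≤ i < n` and `{1, j}` for
`3 ≤ j ≤ n`. -/
def chainG (n : ℕ) : SimpleGraph (ChainV n) :=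
  SimpleGraph.fromRel (fun u v => v.val = u.val + 1 ∨ (u.val = 1 ∧ 3 ≤ v.val))

namespace ChainV

variable {n : ℕ}

theorem mem_Icc (u : ChainV n) : 1 ≤ u.val ∧ u.val ≤ n :=
  Finset.mem_Icc.mp u.property

theorem ext_iff {u v : ChainV n} : u = v ↔ u.val = v.val :=
  Subtype.ext_iff

theorem nat_card : Nat.card (ChainV n) = n := by
  rw [ChainV, Nat.card_eq_finsetCard, Nat.card_Icc, Nat.add_sub_cancel]

end ChainV

section Chain

variable {n : ℕ}

theorem chainPar_eq_none_iff {v : ChainV n} : chainPar n v = none ↔ v.val = 1 := by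
  unfold chainPar
  split <;> simp_all

theorem chainPar_eq_some_iff {u v : ChainV n} : chainPar n v = some u ↔ u.val + 1 = v.val := by
  have hu := u.mem_Icc
  have hv := v.mem_Icc
  unfold chainPar
  split
  · simp only [reduceCtorEq, false_iff]
    omega
  · constructor
    · rintro ⟨⟩
      dsimp only
      omega
    · intro h
      exact congrArg some (ChainV.ext_iff.mpr (by dsimp only; omega))

theorem anc_chainPar_iff {u v : ChainV n} : anc (chainPar n) u v ↔ u.val < v.val := by
  constructor
  · intro h
    induction h with
    | single hpar => exact (chainPar_eq_some_iff.mp hpar).le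
    | tail _ hpar ih => have := chainPar_eq_some_iff.mp hpar; omega
  · intro h
    obtain ⟨k, hk⟩ := Nat.exists_eq_add_of_lt h
    induction k generalizing v with
    | zero => exact .single (chainPar_eq_some_iff.mpr hk.symm)
    | succ k ih =>
      have hv := v.mem_Icc
      let w : ChainV n := ⟨v.val - 1, Finset.mem_Icc.mpr (by omega)⟩
      have hw : w.val = v.val - 1 := rfl
      exact .tail (ih (v := w) (by omega) (by omega)) (chainPar_eq_some_iff.mpr (by omega))

theorem chainG_adj_iff {u v : ChainV n} :
    (chainG n).Adj u v ↔ u.val ≠ v.val ∧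
      ((v.val = u.val + 1 ∨ (u.val = 1 ∧ 3 ≤ v.val)) ∨
        (u.val = v.val + 1 ∨ (v.val = 1 ∧ 3 ≤ u.val))) := by
  rw [chainG, SimpleGraph.fromRel_adj, ne_eq, ne_eq, ChainV.ext_iff]

theorem desc_chainPar (i : ChainV n) :
    desc (chainPar n) i = {u : ChainV n | i.val + 1 ≤ u.val} := by
  ext u
  exact anc_chainPar_iff

theorem sepSet_chainG {i : ChainV n} (hi : 2 ≤ i.val) :
    sepSet (chainPar n) (chainG n) i = {u : ChainV n | u.val = 1 ∨ u.val = i.val - 1} := by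
  ext u
  have hu := u.mem_Icc
  simp only [sepSet, desc_chainPar, Set.mem_ofPred_eq, anc_chainPar_iff, chainG_adj_iff]
  constructor
  · rintro ⟨hlt, hadj | ⟨w, hw, hadj⟩⟩ <;> omega
  · intro hu
    exact ⟨by omega, Or.inl (by omega)⟩

/-- Every proper descendant of `i` is adjacent to the root, which lies in `Sep(i)`. -/
theorem idSet_chainG {i : ChainV n} (hi : 2 ≤ i.val) :
    idSet (chainPar n) (chainG n) i = {u : ChainV n | i.val + 1 ≤ u.val} := by
  ext u
  have hi' := i.mem_Icc
  simp only [idSet, desc_chainPar, sepSet_chainG hi, Set.mem_ofPred_eq]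
  let root : ChainV n := ⟨1, Finset.mem_Icc.mpr (by omega)⟩
  refine ⟨And.left, fun hu => ⟨hu, root, Or.inl rfl, chainG_adj_iff.mpr ?_⟩⟩
  dsimp only [root]
  omega

theorem sepSet_union_idSet_union_singleton_eq_univ {i : ChainV n} (hi : i.val = 2) :
    sepSet (chainPar n) (chainG n) i ∪ idSet (chainPar n) (chainG n) i ∪ {i} = Set.univ := by
  rw [sepSet_chainG hi.ge, idSet_chainG hi.ge, Set.eq_univ_iff_forall]
  intro u
  have hu := u.mem_Icc
  simp only [Set.mem_union, Set.mem_ofPred_eq, Set.mem_singleton_iff, ChainV.ext_iff]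
  omega

theorem anc_or_anc_of_chainG_adj {u v : ChainV n} (h : (chainG n).Adj u v) :
    anc (chainPar n) u v ∨ anc (chainPar n) v u := by
  rw [chainG_adj_iff] at h
  rw [anc_chainPar_iff, anc_chainPar_iff]
  omega

end Chain

theorem chain_example_general (n : ℕ) :
    -- the data form a rooted tree with root 1
    (∀ rt : ChainV n, rt.val = 1 →
      chainPar n rt = none ∧
      (∀ v : ChainV n, v ≠ rt → chainPar n v ≠ none) ∧
      (∀ v : ChainV n, v ≠ rt → anc (chainPar n) rt v)) ∧
    -- and a pseudo tree for the graph `chainG n`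
    (∀ u v : ChainV n, (chainG n).Adj u v →
      anc (chainPar n) u v ∨ anc (chainPar n) v u) ∧
    -- `Desc(i) = ID(i) = {i+1, …, n}` for every `2 ≤ i ≤ n`
    (∀ i : ChainV n, 2 ≤ i.val →
      desc (chainPar n) i = {u : ChainV n | i.val + 1 ≤ u.val} ∧
      idSet (chainPar n) (chainG n) i = {u : ChainV n | i.val + 1 ≤ u.val}) ∧
    -- `Sep(2) = {1}`
    (∀ i : ChainV n, i.val = 2 →
      sepSet (chainPar n) (chainG n) i = {u : ChainV n | u.val = 1}) ∧
    -- `Sep(i) = {1, i-1}` for `3 ≤ i ≤ n`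
    (∀ i : ChainV n, 3 ≤ i.val →
      sepSet (chainPar n) (chainG n) i =
        {u : ChainV n | u.val = 1 ∨ u.val = i.val - 1}) ∧
    -- `Sep(2) ∪ ID(2) ∪ {2} = {1, …, n}` has cardinality `n`
    (∀ i : ChainV n, i.val = 2 →
      sepSet (chainPar n) (chainG n) i ∪ idSet (chainPar n) (chainG n) i ∪ {i} =
        Set.univ ∧
      (sepSet (chainPar n) (chainG n) i ∪ idSet (chainPar n) (chainG n) i ∪
        {i}).ncard = n) := by
  refine ⟨fun rt hrt => ?_, fun u v => anc_or_anc_of_chainG_adj,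
    fun i hi => ⟨desc_chainPar i, idSet_chainG hi⟩, fun i hi => ?_,
    fun i hi => sepSet_chainG (by omega),
    fun i hi => ⟨sepSet_union_idSet_union_singleton_eq_univ hi, ?_⟩⟩
  · have hne : ∀ v : ChainV n, v ≠ rt → v.val ≠ 1 :=
      fun v hv h => hv (ChainV.ext_iff.mpr (h.trans hrt.symm))
    refine ⟨chainPar_eq_none_iff.mpr hrt, fun v hv => ?_, fun v hv => ?_⟩
    · rw [ne_eq, chainPar_eq_none_iff]
      exact hne v hv
    · have hv' := v.mem_Icc
      have hv1 := hne v hv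
      rw [anc_chainPar_iff, hrt]
      omega
  · rw [sepSet_chainG hi.ge, hi]
    simp only [Nat.reduceSub, or_self]
  · rw [sepSet_union_idSet_union_singleton_eq_univ hi, Set.ncard_univ, ChainV.nat_card]

/-- On the chain pseudo tree with back edges to the root, for `2 ≤ i ≤ n`:
`Desc(i) = ID(i) = {i+1, …, n}`, `Sep(2) = {1}` and `Sep(i) = {1, i-1}` for `i ≥ 3`;
hence `Sep(2) ∪ ID(2) ∪ {2} = {1, …, n}` has cardinality `n`. -/
theorem chain_example (n : ℕ) (hn : 3 ≤ n) :
    -- the data form a rooted tree with root 1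
    (∀ rt : ChainV n, rt.val = 1 →
      chainPar n rt = none ∧
      (∀ v : ChainV n, v ≠ rt → chainPar n v ≠ none) ∧
      (∀ v : ChainV n, v ≠ rt → anc (chainPar n) rt v)) ∧
    -- and a pseudo tree for the graph `chainG n`
    (∀ u v : ChainV n, (chainG n).Adj u v →
      anc (chainPar n) u v ∨ anc (chainPar n) v u) ∧
    -- `Desc(i) = ID(i) = {i+1, …, n}` for every `2 ≤ i ≤ n`
    (∀ i : ChainV n, 2 ≤ i.val →
      desc (chainPar n) i = {u : ChainV n | i.val + 1 ≤ u.val} ∧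
      idSet (chainPar n) (chainG n) i = {u : ChainV n | i.val + 1 ≤ u.val}) ∧
    -- `Sep(2) = {1}`
    (∀ i : ChainV n, i.val = 2 →
      sepSet (chainPar n) (chainG n) i = {u : ChainV n | u.val = 1}) ∧
    -- `Sep(i) = {1, i-1}` for `3 ≤ i ≤ n`
    (∀ i : ChainV n, 3 ≤ i.val →
      sepSet (chainPar n) (chainG n) i =
        {u : ChainV n | u.val = 1 ∨ u.val = i.val - 1}) ∧
    -- `Sep(2) ∪ ID(2) ∪ {2} = {1, …, n}` has cardinality `n`
    (∀ i : ChainV n, i.val = 2 →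
      sepSet (chainPar n) (chainG n) i ∪ idSet (chainPar n) (chainG n) i ∪ {i} =
        Set.univ ∧
      (sepSet (chainPar n) (chainG n) i ∪ idSet (chainPar n) (chainG n) i ∪
        {i}).ncard = n) :=
  chain_example_general n
end
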